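/- Let n be a positive integer, ζ_n a primitive n-th root of unity in ℂ, and let k, r be integers with k ≥ r and n > r > 0. Then Σ_{k ∈ I(k,r)} z̄_n(k; ζ_n) = Σ_{j=1}^{r} (1/n) · binom(n, j) · z̄_n(k+1-j; ζ_n), where I(k,r) denotes the set of indices of weight k and depth r. -/

import Mathlib

open Finset

/-- The set of tuples `(m_1,...,m_r)` with `n > m_1 > m_2 > ... > m_r > 0`. -/
def msets (n r : ℕ) : Finset (Fin r → Fin n) :=
  Finset.univ.filter fun m =>
    (∀ i j : Fin r, i < j → m j < m i) ∧ ∀ i, 0 < (m i : ℕ)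

/-- The set of tuples `(m_1,...,m_r)` with `n > m_1 ≥ m_2 ≥ ... ≥ m_r > 0`. -/
def msetsStar (n r : ℕ) : Finset (Fin r → Fin n) :=
  Finset.univ.filter fun m =>
    (∀ i j : Fin r, i ≤ j → m j ≤ m i) ∧ ∀ i, 0 < (m i : ℕ)

/-- The finite multiple harmonic q-series
`z_n(k_1,…,k_r; q) = Σ_{n > m_1 > … > m_r > 0} Π_i q^{(k_i-1)m_i}/[m_i]_q^{k_i}`,
where `[m]_q = (1-q^m)/(1-q)`. -/
noncomputable def z (n : ℕ) {r : ℕ} (k : Fin r → ℕ) (q : ℂ) : ℂ :=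
  ∑ m ∈ msets n r,
    ∏ i, q ^ ((k i - 1) * (m i : ℕ)) / ((1 - q ^ (m i : ℕ)) / (1 - q)) ^ (k i)

/-- The star version `z*_n(k; q)`, summed over `n > m_1 ≥ … ≥ m_r > 0`. -/
noncomputable def zstar (n : ℕ) {r : ℕ} (k : Fin r → ℕ) (q : ℂ) : ℂ :=
  ∑ m ∈ msetsStar n r,
    ∏ i, q ^ ((k i - 1) * (m i : ℕ)) / ((1 - q ^ (m i : ℕ)) / (1 - q)) ^ (k i)

/-- The modified value `z̄_n(k;q) = (1-q)^{-wt(k)} z_n(k;q)`. -/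
noncomputable def zbar (n : ℕ) {r : ℕ} (k : Fin r → ℕ) (q : ℂ) : ℂ :=
  (1 - q)⁻¹ ^ (∑ i, k i) * z n k q

/-- The modified star value `z̄*_n(k;q) = (1-q)^{-wt(k)} z*_n(k;q)`. -/
noncomputable def zstarbar (n : ℕ) {r : ℕ} (k : Fin r → ℕ) (q : ℂ) : ℂ :=
  (1 - q)⁻¹ ^ (∑ i, k i) * zstar n k q

/-- `I(k,r,s)`: the set of indices (tuples of positive integers) of weight `k`,
depth `r` and height `s`. -/
def indexSet3 (k r s : ℕ) : Finset (Fin r → ℕ) :=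
  (Finset.Nat.antidiagonalTuple r k).filter fun a =>
    (∀ i, 1 ≤ a i) ∧ (Finset.univ.filter fun i => 2 ≤ a i).card = s

/-- `I(k,r)`: the set of indices of weight `k` and depth `r`. -/
def indexSet2 (k r : ℕ) : Finset (Fin r → ℕ) :=
  (Finset.Nat.antidiagonalTuple r k).filter fun a => ∀ i, 1 ≤ a i

/-- The one-variable finite q-multiple polylogarithm
`L_{k_1,…,k_r}^{(n)}(t;q) = Σ_{n > m_1 > … > m_r > 0} t^{m_1} / Π_i (1-q^{m_i})^{k_i}`,
with `L_∅(t) = 1`. -/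
noncomputable def Lpoly (n : ℕ) {r : ℕ} (k : Fin r → ℕ) (q t : ℂ) : ℂ :=
  ∑ m ∈ msets n r,
    ∏ i : Fin r, (if i.val = 0 then t ^ (m i : ℕ) else 1) / (1 - q ^ (m i : ℕ)) ^ (k i)

/-- The star version `L*_{k_1,…,k_r}^{(n)}(t;q)`, summed over `n > m_1 ≥ … ≥ m_r > 0`. -/
noncomputable def LpolyStar (n : ℕ) {r : ℕ} (k : Fin r → ℕ) (q t : ℂ) : ℂ :=
  ∑ m ∈ msetsStar n r,
    ∏ i : Fin r, (if i.val = 0 then t ^ (m i : ℕ) else 1) / (1 - q ^ (m i : ℕ)) ^ (k i)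

/-!
Swap the two sums. For fixed `n > m_1 > ⋯ > m_r > 0` put `x_i = ζ^{m_i}` and
`u_i = x_i / (1 - x_i)`; the summand of `z̄_n(a; ζ)` is `∏ u_i^{a_i} / x_i`, so summing over the
indices of weight `k` gives `∏ (1 - x_i)⁻¹ · h_{k-r}(u)`. The divided-difference formula
`h_{k-r}(u) = Σ_i u_i^{k-1} / ∏_{j ≠ i} (u_i - u_j)` turns this into
`Σ_c x_c^{k-1} / (1 - x_c)^k · ∏_{b ≠ c} (1 - x_c) / (x_c - x_b)`, with `c, b` running over the
set `{m_i}`. Summing over all `r`-subsets of `{1, …, n-1}` and singling out `c` leaves the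
elementary symmetric function `e_{r-1}` of `y_b = (1 - ζ^c) / (ζ^c - ζ^b)`, `b ∉ {0, c}`.
Substituting `Y = (1 - ζ^c) t + ζ^c` in `Y^n - 1 = ∏_b (Y - ζ^b)` gives
`N · t (1 - t) ∏_b (1 + y_b t) = ((1 - ζ^c) t + ζ^c)^n - 1` for a constant `N`, so `N e_{r-1}` is
the partial sum `Σ_{j ≤ r} C(n, j) ζ^{c(n-j)} (1 - ζ^c)^j` of binomial terms, and the case
`r = 1` gives `N = n ζ^{c(n-1)} (1 - ζ^c)`.
-/

open Polynomial

section Fin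

variable {M : Type*} [CommMonoid M] {r : ℕ}

theorem Fin.prod_univ_erase_succ (g : Fin (r + 1) → M) (i : Fin r) :
    ∏ j ∈ univ.erase i.succ, g j = g 0 * ∏ j ∈ univ.erase i, g j.succ := by
  simp [← filter_ne', prod_filter, Fin.prod_univ_succ, (Fin.succ_ne_zero _).symm]

theorem Fin.prod_univ_erase_zero (g : Fin (r + 1) → M) :
    ∏ j ∈ univ.erase 0, g j = ∏ j : Fin r, g j.succ := by
  simp [← filter_ne', prod_filter, Fin.prod_univ_succ]

end Fin

theorem mem_indexSet2 {k r : ℕ} {a : Fin r → ℕ} :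
    a ∈ indexSet2 k r ↔ ∑ i, a i = k ∧ ∀ i, 1 ≤ a i := by
  simp [indexSet2, Nat.mem_antidiagonalTuple]

theorem indexSet2_one (k : ℕ) (hk : 1 ≤ k) : indexSet2 k 1 = {fun _ => k} := by
  ext a
  simp only [mem_indexSet2, Fin.sum_univ_one, mem_singleton, funext_iff, Fin.forall_fin_one]
  constructor
  · exact fun h => h.1
  · rintro rfl; exact ⟨rfl, hk⟩

theorem sum_indexSet2_succ {M : Type*} [AddCommMonoid M] (k r : ℕ) (hk : r + 1 ≤ k)
    (f : (Fin (r + 1) → ℕ) → M) :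
    ∑ a ∈ indexSet2 k (r + 1), f a
      = ∑ t ∈ Icc 1 (k - r), ∑ b ∈ indexSet2 (k - t) r, f (Fin.cons t b) := by
  rw [sum_sigma']
  refine sum_nbij' (fun a => ⟨a 0, Fin.tail a⟩) (fun p => Fin.cons p.1 p.2)
    ?_ ?_ (fun a _ => Fin.cons_self_tail a) (fun p _ => by simp) (fun a _ => by simp)
  · intro a ha
    simp only [mem_sigma, mem_Icc, mem_indexSet2, Fin.sum_univ_succ, Fin.tail] at ha ⊢
    have : r ≤ ∑ i : Fin r, a i.succ :=
      le_of_eq_of_le (by simp) (sum_le_sum fun i _ => ha.2 i.succ)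
    exact ⟨⟨ha.2 0, by omega⟩, by omega, fun i => ha.2 i.succ⟩
  · rintro ⟨t, b⟩ hp
    simp only [mem_sigma, mem_Icc, mem_indexSet2] at hp ⊢
    refine ⟨by simp [Fin.sum_univ_succ]; omega, Fin.cases ?_ fun i => ?_⟩
    · simpa using hp.1.1
    · simpa using hp.2.2 i

theorem sum_Icc_pow_mul_pow_mul_sub {R : Type*} [CommRing R] (x c : R) {k M : ℕ} (hM : M ≤ k) :
    (∑ t ∈ Icc 1 M, c ^ t * x ^ (k - t)) * (x - c) = c * x ^ k - c ^ (M + 1) * x ^ (k - M) := by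
  induction M with
  | zero => simp
  | succ M ih =>
    rw [sum_Icc_succ_top (by omega), add_mul, ih (by omega),
      show k - M = k - (M + 1) + 1 by omega]
    ring

section SymmetricFunctions

variable {K : Type*} [Field K]

theorem sum_pow_div_prod_sub {ι : Type*} [DecidableEq ι] {s : Finset ι} {v : ι → K}
    (hv : Set.InjOn v s) {d : ℕ} (hd : d < #s) :
    ∑ i ∈ s, v i ^ d / ∏ j ∈ s.erase i, (v i - v j) = if d = #s - 1 then 1 else 0 := by
  have := Lagrange.coeff_eq_sum hv (P := X ^ d) (by rw [degree_X_pow]; exact_mod_cast hd)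
  simp only [eval_pow, eval_X, coeff_X_pow] at this
  rw [← this, eq_comm]
  congr 1
  simp [eq_comm]

theorem sum_indexSet2_prod_pow (r : ℕ) {k : ℕ} (hk : r + 1 ≤ k) {u : Fin (r + 1) → K}
    (hu : Function.Injective u) :
    ∑ a ∈ indexSet2 k (r + 1), ∏ i, u i ^ a i
      = (∏ i, u i) * ∑ i, u i ^ (k - 1) / ∏ j ∈ univ.erase i, (u i - u j) := by
  induction r generalizing k with
  | zero => simp [indexSet2_one k hk, ← pow_succ', show k - 1 + 1 = k by omega]
  | succ r ih =>
    set v : Fin (r + 1) → K := fun i => u i.succ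
    have hv : Function.Injective v := fun i j h => Fin.succ_injective _ (hu h)
    set D : Fin (r + 1) → K := fun i => ∏ j ∈ univ.erase i, (v i - v j)
    have hv0 : ∀ i, v i - u 0 ≠ 0 := fun i h => Fin.succ_ne_zero i (hu (sub_eq_zero.mp h))
    have lagrange := sum_pow_div_prod_sub (s := univ) hu.injOn (d := r) (by simp)
    rw [card_univ, Fintype.card_fin, if_neg (by omega), Fin.sum_univ_succ,
      Fin.prod_univ_erase_zero] at lagrange
    simp_rw [Fin.prod_univ_erase_succ] at lagrange
    have geom : ∀ i, ∑ t ∈ Icc 1 (k - (r + 1)), u 0 ^ t * v i ^ (k - 1 - t)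
        = (u 0 * v i ^ (k - 1) - u 0 ^ (k - r) * v i ^ r) / (v i - u 0) := by
      intro i
      rw [eq_div_iff (hv0 i), sum_Icc_pow_mul_pow_mul_sub _ _ (by omega),
        show k - (r + 1) + 1 = k - r by omega, show k - 1 - (k - (r + 1)) = r by omega]
    calc ∑ a ∈ indexSet2 k (r + 1 + 1), ∏ i, u i ^ a i
        = ∑ t ∈ Icc 1 (k - (r + 1)), u 0 ^ t * ((∏ i, v i) * ∑ i, v i ^ (k - t - 1) / D i) := by
          rw [sum_indexSet2_succ _ _ hk]
          refine sum_congr rfl fun t ht => ?_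
          rw [← ih (by simp at ht; omega) hv, mul_sum]
          simp [Fin.prod_univ_succ, v]
      _ = (∏ i, v i) * ∑ i, (∑ t ∈ Icc 1 (k - (r + 1)), u 0 ^ t * v i ^ (k - 1 - t)) / D i := by
          simp_rw [mul_sum, sum_div, mul_sum, Nat.sub_right_comm k]
          rw [sum_comm]
          exact sum_congr rfl fun i _ => sum_congr rfl fun t _ => by ring
      _ = (∏ i, u i) * ∑ i, u i ^ (k - 1) / ∏ j ∈ univ.erase i, (u i - u j) := by
          have hpow : u 0 ^ (k - r) * u 0 ^ r = u 0 * u 0 ^ (k - 1) := by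
            rw [← pow_add, ← pow_succ']; congr 1; omega
          have hsplit : ∀ i, (u 0 * v i ^ (k - 1) - u 0 ^ (k - r) * v i ^ r) / (v i - u 0) / D i
              = u 0 * (v i ^ (k - 1) / ((v i - u 0) * D i))
                - u 0 ^ (k - r) * (v i ^ r / ((v i - u 0) * D i)) := fun i => by
            rw [div_div, sub_div, mul_div_assoc, mul_div_assoc]
          simp_rw [geom, hsplit, sum_sub_distrib, ← mul_sum]
          conv_rhs => rw [Fin.prod_univ_succ, Fin.sum_univ_succ, Fin.prod_univ_erase_zero]
          simp_rw [Fin.prod_univ_erase_succ]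
          rw [eq_neg_of_add_eq_zero_right lagrange]
          linear_combination (∏ i, v i) / (∏ j : Fin (r + 1), (u 0 - v j)) * hpow

theorem sum_indexSet2_prod_pow_div_one_sub_pow (r : ℕ) {k : ℕ} (hk : r + 1 ≤ k)
    {x : Fin (r + 1) → K} (hx : Function.Injective x) (hx0 : ∀ i, x i ≠ 0) (hx1 : ∀ i, x i ≠ 1) :
    ∑ a ∈ indexSet2 k (r + 1), ∏ i, x i ^ (a i - 1) / (1 - x i) ^ a i
      = ∑ i, x i ^ (k - 1) / (1 - x i) ^ k * ∏ j ∈ univ.erase i, (1 - x i) / (x i - x j) := by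
  have hw : ∀ i, 1 - x i ≠ 0 := fun i => sub_ne_zero.mpr (hx1 i).symm
  set u : Fin (r + 1) → K := fun i => x i / (1 - x i)
  have hu : Function.Injective u := fun i j h => hx <| by
    simp only [u, div_eq_div_iff (hw i) (hw j)] at h
    linear_combination h
  have hfactor : ∀ a ∈ indexSet2 k (r + 1),
      ∏ i, x i ^ (a i - 1) / (1 - x i) ^ a i = (∏ i, (x i)⁻¹) * ∏ i, u i ^ a i := by
    intro a ha
    rw [← prod_mul_distrib]
    refine prod_congr rfl fun i _ => ?_
    obtain ⟨e, he⟩ := Nat.exists_eq_add_of_le' ((mem_indexSet2.mp ha).2 i)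
    rw [he, Nat.add_sub_cancel]
    simp only [u, div_pow]
    field_simp [hw i, hx0 i]
    ring
  have hscale : (∏ i, (x i)⁻¹) * ∏ i, u i = ∏ i, (1 - x i)⁻¹ := by
    rw [← prod_mul_distrib]
    exact prod_congr rfl fun i _ => by simp only [u]; field_simp [hw i, hx0 i]
  rw [sum_congr rfl hfactor, ← mul_sum, sum_indexSet2_prod_pow r hk hu, ← mul_assoc, hscale,
    mul_sum]
  refine sum_congr rfl fun i _ => ?_
  have hpair : ∀ j ∈ univ.erase i, (1 - x j)⁻¹ / (u i - u j) = (1 - x i) / (x i - x j) := by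
    intro j hj
    have hij : x i - x j ≠ 0 := sub_ne_zero.mpr (hx.ne (ne_of_mem_erase hj).symm)
    have hsub : u i - u j = (x i - x j) / ((1 - x i) * (1 - x j)) := by
      simp only [u]
      rw [div_sub_div _ _ (hw i) (hw j)]
      ring
    rw [hsub]
    field_simp [hw i, hw j, hij]
  rw [← mul_prod_erase univ _ (mem_univ i), ← prod_congr rfl hpair, prod_div_distrib]
  obtain ⟨e, he⟩ := Nat.exists_eq_add_of_le' (show 1 ≤ k by omega)
  rw [he, Nat.add_sub_cancel, pow_succ]
  simp only [u, div_pow]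
  field_simp [hw i]

end SymmetricFunctions

theorem sum_powersetCard_succ_sum_erase {α M : Type*} [DecidableEq α] [AddCommMonoid M]
    (A : Finset α) (d : ℕ) (F : α → Finset α → M) :
    ∑ T ∈ powersetCard (d + 1) A, ∑ c ∈ T, F c (T.erase c)
      = ∑ c ∈ A, ∑ S ∈ powersetCard d (A.erase c), F c S := by
  rw [sum_sigma', sum_sigma']
  refine sum_nbij' (fun p => ⟨p.2, p.1.erase p.2⟩) (fun p => ⟨insert p.1 p.2, p.1⟩)
    ?_ ?_ ?_ ?_ (fun _ _ => rfl)
  · rintro ⟨T, c⟩ h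
    simp only [mem_sigma, mem_powersetCard] at h ⊢
    refine ⟨h.1.1 h.2, erase_subset_erase c h.1.1, ?_⟩
    rw [card_erase_of_mem h.2, h.1.2, Nat.add_sub_cancel]
  · rintro ⟨c, S⟩ h
    simp only [mem_sigma, mem_powersetCard] at h ⊢
    have hcS : c ∉ S := fun hc => (mem_erase.mp (h.2.1 hc)).1 rfl
    refine ⟨⟨insert_subset h.1 (h.2.1.trans (erase_subset c A)), ?_⟩, mem_insert_self c S⟩
    rw [card_insert_of_notMem hcS, h.2.2]
  · rintro ⟨T, c⟩ h
    simp only [mem_sigma] at h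
    simp [insert_erase h.2]
  · rintro ⟨c, S⟩ h
    simp only [mem_sigma, mem_powersetCard] at h
    simp [erase_insert fun hc => (mem_erase.mp (h.2.1 hc)).1 rfl]

theorem mem_msets_iff {n r : ℕ} {m : Fin r → Fin n} :
    m ∈ msets n r ↔ StrictAnti (fun i => (m i : ℕ)) ∧ ∀ i, 0 < (m i : ℕ) := by
  simp only [msets, mem_filter, mem_univ, true_and]
  rfl

theorem sum_msets_eq_sum_powersetCard {M : Type*} [AddCommMonoid M] (n r : ℕ)
    (H : Finset ℕ → M) :
    ∑ m ∈ msets n r, H (univ.image fun i => (m i : ℕ))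
      = ∑ T ∈ powersetCard r (Ico 1 n), H T := by
  refine sum_bij (fun m _ => univ.image fun i => (m i : ℕ)) ?_ ?_ ?_ (fun _ _ => rfl)
  · intro m hm
    obtain ⟨hanti, hpos⟩ := mem_msets_iff.mp hm
    simp only [mem_powersetCard, card_image_of_injective _ hanti.injective, card_univ,
      Fintype.card_fin, and_true]
    intro c hc
    obtain ⟨i, -, rfl⟩ := mem_image.mp hc
    exact mem_Ico.mpr ⟨hpos i, (m i).isLt⟩
  · intro m₁ hm₁ m₂ hm₂ h
    have := ((mem_msets_iff.mp hm₁).1.range_inj (mem_msets_iff.mp hm₂).1).mp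
      (by simpa [Set.image_univ] using congrArg (fun s : Finset ℕ => (s : Set ℕ)) h)
    exact funext fun i => Fin.ext (congrFun this i)
  · intro T hT
    obtain ⟨hsub, hcard⟩ := mem_powersetCard.mp hT
    have hlt : ∀ i : Fin r, T.orderEmbOfFin hcard i.rev ∈ Ico 1 n := fun i =>
      hsub (orderEmbOfFin_mem T hcard i.rev)
    refine ⟨fun i => ⟨T.orderEmbOfFin hcard i.rev, (mem_Ico.mp (hlt i)).2⟩,
      mem_msets_iff.mpr ⟨fun i j hij => ?_, fun i => (mem_Ico.mp (hlt i)).1⟩, ?_⟩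
    · exact (T.orderEmbOfFin hcard).strictMono (Fin.rev_lt_rev.mpr hij)
    · apply Finset.coe_injective
      simp only [coe_image, coe_univ, Set.image_univ]
      exact (Fin.rev_surjective.range_comp (T.orderEmbOfFin hcard)).trans
        (range_orderEmbOfFin T hcard)

theorem IsPrimitiveRoot.pow_sub_one_eq_prod_range {R : Type*} [CommRing R] [IsDomain R] {ζ : R}
    {n : ℕ} (hn : 0 < n) (hζ : IsPrimitiveRoot ζ n) (y : R) :
    y ^ n - 1 = ∏ i ∈ range n, (y - ζ ^ i) := by
  classical
  have himage : (range n).image (ζ ^ ·) = nthRootsFinset n (1 : R) := by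
    refine eq_of_subset_of_card_le (fun x hx => ?_) ?_
    · obtain ⟨i, -, rfl⟩ := mem_image.mp hx
      rw [Polynomial.mem_nthRootsFinset hn, ← pow_mul, mul_comm, pow_mul, hζ.pow_eq_one, one_pow]
    · rw [hζ.card_nthRootsFinset, card_image_of_injOn hζ.injOn_pow, card_range]
  rw [← one_pow n, hζ.pow_sub_pow_eq_prod_sub_mul y 1 hn, ← himage, prod_image hζ.injOn_pow]
  simp

namespace Polynomial

variable {R : Type*} [CommRing R]

theorem coeff_prod_one_add_C_mul_X {ι : Type*} (s : Finset ι) (y : ι → R) (d : ℕ) :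
    (∏ i ∈ s, (1 + C (y i) * X)).coeff d = ∑ S ∈ s.powersetCard d, ∏ i ∈ S, y i := by
  classical
  rw [prod_one_add, finsetSum_coeff, powersetCard_eq_filter, sum_filter]
  refine sum_congr rfl fun S _ => ?_
  rw [prod_mul_distrib, prod_const, ← map_prod, coeff_C_mul_X_pow]
  exact if_congr eq_comm rfl rfl

theorem sum_range_coeff_one_sub_X_mul (p : R[X]) (s : ℕ) :
    ∑ i ∈ range (s + 1), ((1 - X) * p).coeff i = p.coeff s := by
  induction s with
  | zero => simp [sub_mul]
  | succ s ih =>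
    rw [sum_range_succ, ih]
    simp [sub_mul, coeff_X_mul]

theorem coeff_C_mul_X_add_C_pow (a b : R) (n j : ℕ) :
    ((C a * X + C b) ^ n).coeff j = n.choose j * b ^ (n - j) * a ^ j := by
  have hterm : ∀ m, (C a * X) ^ m * C b ^ (n - m) * (n.choose m : R[X])
      = C (n.choose m * b ^ (n - m) * a ^ m) * X ^ m := fun m => by
    simp only [map_mul, map_pow, map_natCast]
    ring
  simp_rw [add_pow, hterm, finsetSum_coeff, coeff_C_mul_X_pow, sum_ite_eq, mem_range]
  split_ifs with h
  · rfl
  · simp [Nat.choose_eq_zero_of_lt (by omega : n < j)]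

end Polynomial

theorem IsPrimitiveRoot.sum_powersetCard_prod_one_sub_div_sub {K : Type*} [Field K] {ζ : K}
    {n : ℕ} (hζ : IsPrimitiveRoot ζ n) {c : ℕ} (hc : c ∈ Ico 1 n) (d : ℕ) :
    n * (ζ ^ c) ^ (n - 1) * (1 - ζ ^ c) *
        ∑ S ∈ powersetCard d ((Ico 1 n).erase c), ∏ b ∈ S, (1 - ζ ^ c) / (ζ ^ c - ζ ^ b)
      = ∑ j ∈ Icc 1 (d + 1), n.choose j * (ζ ^ c) ^ (n - j) * (1 - ζ ^ c) ^ j := by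
  obtain ⟨hc1, hcn⟩ := mem_Ico.mp hc
  have hn : 0 < n := by omega
  set Q := ζ ^ c
  set A := (Ico 1 n).erase c
  have hQn : Q ^ n = 1 := by rw [← pow_mul, mul_comm, pow_mul, hζ.pow_eq_one, one_pow]
  have hQb : ∀ b ∈ A, Q - ζ ^ b ≠ 0 := fun b hb => sub_ne_zero.mpr fun h =>
    ne_of_mem_erase hb <| hζ.injOn_pow (by simp [A] at hb ⊢; omega) (by simpa using hcn) h.symm
  set y : ℕ → K := fun b => (1 - Q) / (Q - ζ ^ b)
  set F : K[X] := ∏ b ∈ A, (1 + C (y b) * X)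
  set N : K := (Q - 1) * (1 - Q) * ∏ b ∈ A, (Q - ζ ^ b)
  have hfactor : (1 - X) * (C N * (X * F)) = (C (1 - Q) * X + C Q) ^ n - 1 := by
    rw [(hζ.map_of_injective C_injective).pow_sub_one_eq_prod_range hn]
    have hrange : range n = insert 0 (insert c A) := by
      rw [insert_erase hc]
      ext
      simp
      omega
    rw [hrange, prod_insert (by simp [A]; omega), prod_insert (by simp [A])]
    have hlinear : ∀ b ∈ A, C (1 - Q) * X + C Q - C ζ ^ b = C (Q - ζ ^ b) * (1 + C (y b) * X) := by
      intro b hb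
      rw [mul_add, ← mul_assoc, ← C_mul, mul_div_cancel₀ _ (hQb b hb)]
      simp only [map_sub, map_pow]
      ring
    rw [prod_congr rfl hlinear, prod_mul_distrib, ← map_prod]
    simp only [N, map_mul, map_sub, map_one, pow_zero, Q, map_pow]
    ring
  have hpartial : ∀ s, N * F.coeff s
      = ∑ i ∈ range (s + 2), ((C (1 - Q) * X + C Q) ^ n - 1).coeff i := by
    intro s
    rw [← hfactor, sum_range_coeff_one_sub_X_mul, coeff_C_mul, coeff_X_mul]
  have hcoeff : ∀ s, ∑ i ∈ range (s + 2), ((C (1 - Q) * X + C Q) ^ n - 1).coeff i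
      = ∑ j ∈ Icc 1 (s + 1), n.choose j * Q ^ (n - j) * (1 - Q) ^ j := by
    intro s
    rw [sum_range_succ', ← Ico_add_one_right_eq_Icc, sum_Ico_eq_sum_range]
    simp only [coeff_sub, coeff_C_mul_X_add_C_pow, coeff_one]
    simp [hQn, add_comm 1]
  have hN : N = n * Q ^ (n - 1) * (1 - Q) := by
    have h0 := hpartial 0
    rw [hcoeff, coeff_prod_one_add_C_mul_X] at h0
    simpa using h0
  rw [← hN, ← coeff_prod_one_add_C_mul_X, hpartial, hcoeff]

theorem zbar_eq_sum (n : ℕ) {r : ℕ} (a : Fin r → ℕ) {q : ℂ} (hq : q ≠ 1) :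
    zbar n a q = ∑ m ∈ msets n r, ∏ i, (q ^ (m i : ℕ)) ^ (a i - 1) / (1 - q ^ (m i : ℕ)) ^ a i := by
  have h1q : 1 - q ≠ 0 := sub_ne_zero.mpr hq.symm
  rw [zbar, z, mul_sum, ← prod_pow_eq_pow_sum]
  refine sum_congr rfl fun m _ => ?_
  rw [← prod_mul_distrib]
  refine prod_congr rfl fun i _ => ?_
  rw [pow_mul', div_pow, div_div_eq_mul_div, inv_pow]
  field_simp

theorem zbar_depth_one (n e : ℕ) {q : ℂ} (hq : q ≠ 1) :
    zbar n (fun _ : Fin 1 => e) q = ∑ c ∈ Ico 1 n, (q ^ c) ^ (e - 1) / (1 - q ^ c) ^ e := by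
  have := sum_msets_eq_sum_powersetCard n 1 fun T => ∑ c ∈ T, (q ^ c) ^ (e - 1) / (1 - q ^ c) ^ e
  simp only [univ_unique, Fin.default_eq_zero, image_singleton, sum_singleton,
    powersetCard_one, sum_map, Function.Embedding.coeFn_mk] at this
  rw [zbar_eq_sum n _ hq, ← this]
  simp

theorem sum_indexSet2_prod_pow_of_mem_msets {K : Type*} [Field K] {ζ : K} {n : ℕ}
    (hζ : IsPrimitiveRoot ζ n) {d k : ℕ} (hk : d + 1 ≤ k) {m : Fin (d + 1) → Fin n}
    (hm : m ∈ msets n (d + 1)) :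
    ∑ a ∈ indexSet2 k (d + 1), ∏ i, (ζ ^ (m i : ℕ)) ^ (a i - 1) / (1 - ζ ^ (m i : ℕ)) ^ a i
      = ∑ c ∈ univ.image (fun i => (m i : ℕ)), (ζ ^ c) ^ (k - 1) / (1 - ζ ^ c) ^ k
          * ∏ b ∈ (univ.image fun i => (m i : ℕ)).erase c, (1 - ζ ^ c) / (ζ ^ c - ζ ^ b) := by
  obtain ⟨hanti, hpos⟩ := mem_msets_iff.mp hm
  have hinj : Function.Injective fun i => ζ ^ (m i : ℕ) := fun i j h =>
    hanti.injective (hζ.injOn_pow (by simp) (by simp) h)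
  rw [sum_indexSet2_prod_pow_div_one_sub_pow d hk hinj
    (fun i => pow_ne_zero _ (hζ.ne_zero (m i).pos.ne'))
    (fun i => hζ.pow_ne_one_of_pos_of_lt (hpos i).ne' (m i).isLt),
    sum_image fun i _ j _ h => hanti.injective h]
  refine sum_congr rfl fun i _ => ?_
  rw [← image_erase hanti.injective, prod_image fun j _ l _ h => hanti.injective h]

theorem IsPrimitiveRoot.sum_indexSet2_zbar {ζ : ℂ} {n : ℕ} (hζ : IsPrimitiveRoot ζ n)
    (hn : 1 < n) {d k : ℕ} (hk : d + 1 ≤ k) :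
    ∑ a ∈ indexSet2 k (d + 1), zbar n a ζ
      = ∑ c ∈ Ico 1 n, (ζ ^ c) ^ (k - 1) / (1 - ζ ^ c) ^ k
          * ∑ S ∈ powersetCard d ((Ico 1 n).erase c), ∏ b ∈ S, (1 - ζ ^ c) / (ζ ^ c - ζ ^ b) := by
  simp_rw [zbar_eq_sum n _ (hζ.ne_one hn)]
  rw [sum_comm, sum_congr rfl fun m hm => sum_indexSet2_prod_pow_of_mem_msets hζ hk hm,
    sum_msets_eq_sum_powersetCard n (d + 1) fun T => ∑ c ∈ T, (ζ ^ c) ^ (k - 1) / (1 - ζ ^ c) ^ k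
      * ∏ b ∈ T.erase c, (1 - ζ ^ c) / (ζ ^ c - ζ ^ b),
    sum_powersetCard_succ_sum_erase (F := fun c S => (ζ ^ c) ^ (k - 1) / (1 - ζ ^ c) ^ k
      * ∏ b ∈ S, (1 - ζ ^ c) / (ζ ^ c - ζ ^ b))]
  simp_rw [mul_sum]

theorem IsPrimitiveRoot.pow_div_one_sub_pow_mul_sum_powersetCard {K : Type*} [Field K]
    [CharZero K] {ζ : K} {n : ℕ} (hζ : IsPrimitiveRoot ζ n) {c : ℕ} (hc : c ∈ Ico 1 n)
    {d k : ℕ} (hk : d + 1 ≤ k) (hdn : d + 1 ≤ n) :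
    (ζ ^ c) ^ (k - 1) / (1 - ζ ^ c) ^ k
        * ∑ S ∈ powersetCard d ((Ico 1 n).erase c), ∏ b ∈ S, (1 - ζ ^ c) / (ζ ^ c - ζ ^ b)
      = ∑ j ∈ Icc 1 (d + 1),
          1 / (n : K) * n.choose j * ((ζ ^ c) ^ (k + 1 - j - 1) / (1 - ζ ^ c) ^ (k + 1 - j)) := by
  obtain ⟨hc1, hcn⟩ := mem_Ico.mp hc
  have hQ : ζ ^ c ≠ 0 := pow_ne_zero _ (hζ.ne_zero (by omega))
  have hw : 1 - ζ ^ c ≠ 0 := sub_ne_zero.mpr (hζ.pow_ne_one_of_pos_of_lt (by omega) hcn).symm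
  have hN : (n : K) * (ζ ^ c) ^ (n - 1) * (1 - ζ ^ c) ≠ 0 :=
    mul_ne_zero (mul_ne_zero (Nat.cast_ne_zero.mpr (by omega)) (pow_ne_zero _ hQ)) hw
  rw [← mul_div_cancel_left₀ (∑ S ∈ _, _) hN, hζ.sum_powersetCard_prod_one_sub_div_sub hc d,
    sum_div, mul_sum]
  refine sum_congr rfl fun j hj => ?_
  obtain ⟨hj1, hjd⟩ := mem_Icc.mp hj
  obtain ⟨i, rfl⟩ : ∃ i, j = i + 1 := ⟨j - 1, by omega⟩
  obtain ⟨e, rfl⟩ : ∃ e, k = i + 1 + e := ⟨k - (i + 1), by omega⟩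
  obtain ⟨f, rfl⟩ : ∃ f, n = i + 1 + f := ⟨n - (i + 1), by omega⟩
  rw [show i + 1 + e - 1 = i + e by omega, show i + 1 + f - 1 = i + f by omega,
    show i + 1 + f - (i + 1) = f by omega, show i + 1 + e + 1 - (i + 1) = e + 1 by omega,
    show e + 1 - 1 = e by omega]
  field_simp
  ring

theorem zbar_sum_formula_general (n : ℕ) (ζ : ℂ) (hζ : IsPrimitiveRoot ζ n)
    (k r : ℕ) (hkr : r ≤ k) (hr : 0 < r) (hrn : r < n) :
    ∑ a ∈ indexSet2 k r, zbar n a ζ =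
      ∑ j ∈ Finset.Icc 1 r,
        (1 / (n : ℂ)) * (n.choose j : ℂ) * zbar n (fun _ : Fin 1 => k + 1 - j) ζ := by
  obtain ⟨d, rfl⟩ : ∃ d, r = d + 1 := ⟨r - 1, by omega⟩
  simp_rw [hζ.sum_indexSet2_zbar (by omega) hkr, zbar_depth_one n _ (hζ.ne_one (by omega)),
    mul_sum (Ico 1 n)]
  rw [sum_comm]
  exact sum_congr rfl fun c hc => hζ.pow_div_one_sub_pow_mul_sum_powersetCard hc hkr hrn.le

/-- the sum formula
`Σ_{k ∈ I(k,r)} z̄_n(k;ζ_n) = Σ_{j=1}^r (1/n)·C(n,j)·z̄_n(k+1-j;ζ_n)` for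
`k ≥ r` and `n > r > 0`. -/
theorem zbar_sum_formula (n : ℕ) (hn : 0 < n) (ζ : ℂ) (hζ : IsPrimitiveRoot ζ n)
    (k r : ℕ) (hkr : r ≤ k) (hr : 0 < r) (hrn : r < n) :
    ∑ a ∈ indexSet2 k r, zbar n a ζ =
      ∑ j ∈ Finset.Icc 1 r,
        (1 / (n : ℂ)) * (n.choose j : ℂ) * zbar n (fun _ : Fin 1 => k + 1 - j) ζ :=
  zbar_sum_formula_general n ζ hζ k r hkr hr hrn
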